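/- arXiv:1905.04281 — 4 statements merged into one kernel-verified Lean document; each statement's English description precedes it below -/
import Mathlib

section
/- Exclusion lemma for minmax estimators (Lemma 2). Let E be a real vector space, F ⊆ E, f* ∈ F, 𝓑 ⊆ E, ‖·‖ : E → ℝ any function, λ ∈ ℝ, η > 0, and T : F × F → ℝ antisymmetric, i.e. T(f,g) = −T(g,f) for all f,g ∈ F. Assume: (i) for every f ∈ F with f − f* ∉ 𝓑, T(f*, f) + λ(‖f*‖ − ‖f‖) < −η; (ii) for every g ∈ F, T(f*, g) + λ(‖f*‖ − ‖g‖) ≤ η. Then every f̂ ∈ F satisfying sup_{g∈F}(T(f̂, g) + λ(‖f̂‖ − ‖g‖)) ≤ sup_{g∈F}(T(f*, g) + λ(‖f*‖ − ‖g‖)) satisfies f̂ − f* ∈ 𝓑. -/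
/-!
By antisymmetry of `T`, hypothesis (i) at `fhat` says that the criterion of `fhat`, tested
against `g = fstar`, exceeds `η`; hypothesis (ii) says the criterion of `fstar` is at most `η`.
So `fhat` cannot beat `fstar` unless `fhat - fstar ∈ 𝓑`.
-/

theorem minmax_exclusion_lemma_general
    {E : Type*} [AddCommGroup E]
    (F : Set E) (fstar : E) (hfstar : fstar ∈ F)
    (𝓑 : Set E) (Nrm : E → ℝ) (lam : ℝ) (η : ℝ)
    (T : E → E → ℝ)
    (hanti : ∀ f ∈ F, ∀ g ∈ F, T f g = -T g f)
    (hi : ∀ f ∈ F, f - fstar ∉ 𝓑 →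
      T fstar f + lam * (Nrm fstar - Nrm f) < -η)
    (hii : ∀ g ∈ F, T fstar g + lam * (Nrm fstar - Nrm g) ≤ η)
    (fhat : E) (hfhatF : fhat ∈ F)
    (hmin : (⨆ g : F, ((T fhat g + lam * (Nrm fhat - Nrm (g : E)) : ℝ) : EReal)) ≤
      ⨆ g : F, ((T fstar g + lam * (Nrm fstar - Nrm (g : E)) : ℝ) : EReal)) :
    fhat - fstar ∈ 𝓑 := by
  by_contra hB
  have hfar : η < T fhat fstar + lam * (Nrm fhat - Nrm fstar) := by
    have := hi fhat hfhatF hB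
    rw [hanti fhat hfhatF fstar hfstar]
    linarith
  have hhat :
      (η : EReal) < ⨆ g : F, ((T fhat g + lam * (Nrm fhat - Nrm (g : E)) : ℝ) : EReal) :=
    lt_iSup_iff.2 ⟨⟨fstar, hfstar⟩, EReal.coe_lt_coe_iff.2 hfar⟩
  have hstar : (⨆ g : F, ((T fstar g + lam * (Nrm fstar - Nrm (g : E)) : ℝ) : EReal)) ≤ η :=
    iSup_le fun g => EReal.coe_le_coe_iff.2 (hii g g.2)
  exact (hhat.trans_le (hmin.trans hstar)).false

/-- Exclusion lemma for minmax estimators (Lemma 2). -/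
theorem minmax_exclusion_lemma
    {E : Type*} [AddCommGroup E] [Module ℝ E]
    (F : Set E) (fstar : E) (hfstar : fstar ∈ F)
    (𝓑 : Set E) (Nrm : E → ℝ) (lam : ℝ) (η : ℝ) (hη : 0 < η)
    (T : E → E → ℝ)
    (hanti : ∀ f ∈ F, ∀ g ∈ F, T f g = -T g f)
    (hi : ∀ f ∈ F, f - fstar ∉ 𝓑 →
      T fstar f + lam * (Nrm fstar - Nrm f) < -η)
    (hii : ∀ g ∈ F, T fstar g + lam * (Nrm fstar - Nrm g) ≤ η)
    (fhat : E) (hfhatF : fhat ∈ F)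
    (hmin : (⨆ g : F, ((T fhat g + lam * (Nrm fhat - Nrm (g : E)) : ℝ) : EReal)) ≤
      ⨆ g : F, ((T fstar g + lam * (Nrm fstar - Nrm (g : E)) : ℝ) : EReal)) :
    fhat - fstar ∈ 𝓑 :=
  minmax_exclusion_lemma_general F fstar hfstar 𝓑 Nrm lam η T hanti hi hii fhat hfhatF hmin
end

section
/- Lower bound on the regularization increment under the sparsity equation (equation (eq:homogen_reg)). Let E be a real vector space with a seminorm ‖·‖, let f*, f₀ ∈ E and ρ > 0. Assume that for every ε > 0 there exist v ∈ E with ‖f* − v‖ ≤ ρ/20 and a linear functional z : E → ℝ with z ∈ (∂‖·‖)_v (i.e. ‖v + h‖ − ‖v‖ ≥ z(h) for all h ∈ E) such that z(f₀ − f*) ≥ 4ρ/5 − ε. Then ‖f₀‖ − ‖f*‖ ≥ 7ρ/10. -/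
/-!
A subgradient `z` of the seminorm at `v` satisfies `z (x - y) ≤ ‖x‖ - ‖y‖ + 2‖y - v‖`, by the
triangle inequality on both sides of the subgradient inequality with increment `x - y`. With
`‖f* - v‖ ≤ ρ/20` this turns `z (f₀ - f*) ≥ 4ρ/5 - ε` into `‖f₀‖ - ‖f*‖ ≥ 7ρ/10 - ε` for all `ε > 0`.
-/

namespace Seminorm

variable {E : Type*} [AddCommGroup E] [Module ℝ E]

/-- `z` lies in the subdifferential `(∂p)_v` of the seminorm `p` at `v`. -/
def IsSubgradient (p : Seminorm ℝ E) (v : E) (z : E →ₗ[ℝ] ℝ) : Prop :=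
  ∀ h, z h ≤ p (v + h) - p v

theorem IsSubgradient.apply_sub_le {p : Seminorm ℝ E} {v : E} {z : E →ₗ[ℝ] ℝ}
    (hz : p.IsSubgradient v z) (x y : E) :
    z (x - y) ≤ p x - p y + 2 * p (y - v) := by
  have hupper : p (v + (x - y)) ≤ p x + p (y - v) := by
    rw [show v + (x - y) = x - (y - v) by abel]
    exact map_sub_le_add p _ _
  have hlower : p y ≤ p v + p (y - v) := by
    simpa using map_add_le_add p v (y - v)
  linarith [hz (x - y)]

end Seminorm

theorem regularization_increment_lower_bound_general
    {E : Type*} [AddCommGroup E] [Module ℝ E]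
    (Nrm : Seminorm ℝ E)
    (fstar f₀ : E) (ρ : ℝ)
    (hsup : ∀ ε > (0 : ℝ), ∃ v : E, Nrm (fstar - v) ≤ ρ / 20 ∧
      ∃ z : E →ₗ[ℝ] ℝ, (∀ h, z h ≤ Nrm (v + h) - Nrm v) ∧
        4 * ρ / 5 - ε ≤ z (f₀ - fstar)) :
    7 * ρ / 10 ≤ Nrm f₀ - Nrm fstar := by
  refine le_of_forall_pos_le_add fun ε hε => ?_
  obtain ⟨v, hv, z, hz, hzε⟩ := hsup ε hε
  have := Seminorm.IsSubgradient.apply_sub_le (p := Nrm) hz f₀ fstar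
  linarith

/-- Lower bound on the regularization increment under the sparsity equation
(equation (eq:homogen_reg)). -/
theorem regularization_increment_lower_bound
    {E : Type*} [AddCommGroup E] [Module ℝ E]
    (Nrm : Seminorm ℝ E)
    (fstar f₀ : E) (ρ : ℝ) (hρ : 0 < ρ)
    (hsup : ∀ ε > (0 : ℝ), ∃ v : E, Nrm (fstar - v) ≤ ρ / 20 ∧
      ∃ z : E →ₗ[ℝ] ℝ, (∀ h, z h ≤ Nrm (v + h) - Nrm v) ∧
        4 * ρ / 5 - ε ≤ z (f₀ - fstar)) :
    7 * ρ / 10 ≤ Nrm f₀ - Nrm fstar :=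
  regularization_increment_lower_bound_general Nrm fstar f₀ ρ hsup
end

section
/- Sparsity equation for the Group-LASSO norm (Lemma 3). Let G₁,…,G_M be a partition of {1,…,p}, let ρ > 0 and r > 0, and let t* = u + v ∈ ℝ^p with ‖u‖_GL ≤ ρ/20 and v group-sparse, i.e. v_{G_k} = 0 for all k ∉ I for some I ⊆ {1,…,M}. Assume 100·|I| ≤ (ρ/r)². Then for every w ∈ ℝ^p with ‖w‖_GL = ρ and ‖w‖₂ ≤ r there exists z* ∈ ℝ^p such that ‖z*_{G_k}‖₂ ≤ 1 for every k ∈ {1,…,M}, ⟨z*, v⟩ = ‖v‖_GL (so z* is a subgradient of ‖·‖_GL at v, hence z* lies in Γ_{t*}(ρ)), and ⟨z*, w⟩ ≥ 4ρ/5. In particular, Δ(ρ) := inf{ sup_{z*∈Γ_{t*}(ρ)} ⟨z*, w⟩ : ‖w‖_GL = ρ, ‖w‖₂ ≤ r } ≥ 4ρ/5, i.e. ρ satisfies the sparsity equation for the Group-LASSO norm. -/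
/-!
On each group `G k` take the unit vector along `v` if `v` does not vanish there, and the unit
vector along `w` otherwise. This `z` has all group norms at most `1` and `⟨z, v⟩ = ‖v‖_GL`, so
it is a subgradient at `v`, and `v` lies within `ρ / 20` of `t* = u + v`. Off `I` the vector `z`
recovers `‖w_{G_k}‖` exactly, on `I` it loses at most `‖w_{G_k}‖` (Cauchy–Schwarz), hence
`⟨z, w⟩ ≥ ρ - 2 ∑_{k ∈ I} ‖w_{G_k}‖ ≥ ρ - 2 √|I| ‖w‖₂ ≥ ρ - ρ / 5`.
The supremum is finite because every subgradient satisfies `⟨z, w⟩ ≤ ‖w‖_GL`.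
-/

/-- Euclidean norm on `Fin p → ℝ`. -/
noncomputable def euclNorm {p : ℕ} (t : Fin p → ℝ) : ℝ :=
  Real.sqrt (∑ i, t i ^ 2)

/-- Coordinate projection of `t` onto the coordinates in `G`. -/
def coordProj {p : ℕ} (G : Finset (Fin p)) (t : Fin p → ℝ) : Fin p → ℝ :=
  fun i => if i ∈ G then t i else 0

/-- The Group-LASSO norm associated with the groups `G₁,…,G_M`. -/
noncomputable def groupLassoNorm {p M : ℕ} (G : Fin M → Finset (Fin p))
    (t : Fin p → ℝ) : ℝ :=
  ∑ k, euclNorm (coordProj (G k) t)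

/-- Euclidean inner product on `Fin p → ℝ`. -/
def dotProd {p : ℕ} (z t : Fin p → ℝ) : ℝ := ∑ i, z i * t i

open Function

section Euclidean

variable {p : ℕ}

lemma euclNorm_eq_norm (t : Fin p → ℝ) :
    euclNorm t = ‖(WithLp.toLp 2 t : EuclideanSpace ℝ (Fin p))‖ := by
  simp [euclNorm, EuclideanSpace.norm_eq]

lemma dotProd_eq_inner (z t : Fin p → ℝ) :
    dotProd z t = inner ℝ (WithLp.toLp 2 z : EuclideanSpace ℝ (Fin p)) (WithLp.toLp 2 t) := by
  simp [dotProd, PiLp.inner_apply, mul_comm]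

lemma euclNorm_nonneg (t : Fin p → ℝ) : 0 ≤ euclNorm t := Real.sqrt_nonneg _

lemma euclNorm_zero : euclNorm (0 : Fin p → ℝ) = 0 := by simp [euclNorm]

lemma euclNorm_add_le (s t : Fin p → ℝ) : euclNorm (s + t) ≤ euclNorm s + euclNorm t := by
  simpa only [euclNorm_eq_norm, WithLp.toLp_add] using norm_add_le _ _

lemma abs_dotProd_le (z t : Fin p → ℝ) : |dotProd z t| ≤ euclNorm z * euclNorm t := by
  simpa only [dotProd_eq_inner, euclNorm_eq_norm] using abs_real_inner_le_norm _ _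

lemma dotProd_self (t : Fin p → ℝ) : dotProd t t = euclNorm t ^ 2 := by
  simpa only [dotProd_eq_inner, euclNorm_eq_norm] using real_inner_self_eq_norm_sq _

lemma euclNorm_inv_smul_self_le_one (t : Fin p → ℝ) : euclNorm ((euclNorm t)⁻¹ • t) ≤ 1 := by
  simp only [euclNorm_eq_norm, WithLp.toLp_smul, norm_smul, norm_inv, norm_norm]
  exact inv_mul_le_one_of_le₀ le_rfl (norm_nonneg _)

lemma abs_dotProd_le_of_euclNorm_le_one {z : Fin p → ℝ} (hz : euclNorm z ≤ 1)
    (t : Fin p → ℝ) : |dotProd z t| ≤ euclNorm t :=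
  (abs_dotProd_le z t).trans (mul_le_of_le_one_left (euclNorm_nonneg t) hz)

lemma dotProd_inv_smul_self (t : Fin p → ℝ) : dotProd ((euclNorm t)⁻¹ • t) t = euclNorm t := by
  rw [dotProd_eq_inner, WithLp.toLp_smul, real_inner_smul_left, ← dotProd_eq_inner,
    dotProd_self]
  rcases eq_or_ne (euclNorm t) 0 with h | h
  · simp [h]
  · field_simp

lemma dotProd_add_right (z s t : Fin p → ℝ) : dotProd z (s + t) = dotProd z s + dotProd z t :=
  dotProduct_add z s t

lemma dotProd_sum_right {ι : Type*} (z : Fin p → ℝ) (s : Finset ι) (t : ι → Fin p → ℝ) :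
    dotProd z (∑ k ∈ s, t k) = ∑ k ∈ s, dotProd z (t k) :=
  dotProduct_sum z s t

end Euclidean

section CoordProj

variable {p M : ℕ}

lemma coordProj_smul (G : Finset (Fin p)) (c : ℝ) (t : Fin p → ℝ) :
    coordProj G (c • t) = c • coordProj G t := by
  ext i; simp [coordProj]

lemma dotProd_coordProj_right (G : Finset (Fin p)) (z t : Fin p → ℝ) :
    dotProd z (coordProj G t) = dotProd (coordProj G z) (coordProj G t) := by
  unfold dotProd coordProj; congr 1; ext i; split_ifs <;> simp

lemma sum_coordProj {G : Fin M → Finset (Fin p)} (hdisj : Pairwise (Disjoint on G))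
    (hcover : ∀ i : Fin p, ∃ k, i ∈ G k) (t : Fin p → ℝ) :
    ∑ k, coordProj (G k) t = t := by
  ext i
  obtain ⟨k, hk⟩ := hcover i
  rw [Finset.sum_apply, Finset.sum_eq_single k]
  · simp [coordProj, hk]
  · intro l _ hlk
    simp [coordProj, Finset.disjoint_left.mp (hdisj hlk.symm) hk]
  · simp

lemma coordProj_sum_coordProj {G : Fin M → Finset (Fin p)}
    (hdisj : Pairwise (Disjoint on G)) (t : Fin M → Fin p → ℝ) (k : Fin M) :
    coordProj (G k) (∑ l, coordProj (G l) (t l)) = coordProj (G k) (t k) := by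
  ext i
  simp only [coordProj, Finset.sum_apply]
  split_ifs with hi
  · rw [Finset.sum_eq_single k (fun l _ hlk => ?_) (by simp), if_pos hi]
    rw [if_neg (Finset.disjoint_left.mp (hdisj hlk.symm) hi)]
  · rfl

end CoordProj

section GroupLasso

variable {p M : ℕ}

lemma groupLassoNorm_nonneg (G : Fin M → Finset (Fin p)) (t : Fin p → ℝ) :
    0 ≤ groupLassoNorm G t :=
  Finset.sum_nonneg fun _ _ => euclNorm_nonneg _

lemma groupLassoNorm_add_le (G : Fin M → Finset (Fin p)) (s t : Fin p → ℝ) :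
    groupLassoNorm G (s + t) ≤ groupLassoNorm G s + groupLassoNorm G t := by
  rw [groupLassoNorm, groupLassoNorm, groupLassoNorm, ← Finset.sum_add_distrib]
  gcongr with k
  have : coordProj (G k) (s + t) = coordProj (G k) s + coordProj (G k) t := by
    ext i; simp [coordProj, apply_ite₂ (· + ·)]
  rw [this]
  exact euclNorm_add_le _ _

variable {G : Fin M → Finset (Fin p)}

lemma dotProd_eq_sum_coordProj (hdisj : Pairwise (Disjoint on G))
    (hcover : ∀ i, ∃ k, i ∈ G k) (z t : Fin p → ℝ) :
    dotProd z t = ∑ k, dotProd (coordProj (G k) z) (coordProj (G k) t) := by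
  conv_lhs => rw [← sum_coordProj hdisj hcover t]
  exact (dotProd_sum_right _ _ _).trans
    (Finset.sum_congr rfl fun k _ => dotProd_coordProj_right _ _ _)

lemma euclNorm_sq_eq_sum (hdisj : Pairwise (Disjoint on G))
    (hcover : ∀ i, ∃ k, i ∈ G k) (t : Fin p → ℝ) :
    euclNorm t ^ 2 = ∑ k, euclNorm (coordProj (G k) t) ^ 2 := by
  simp only [← dotProd_self, ← dotProd_eq_sum_coordProj hdisj hcover]

lemma sq_sum_euclNorm_coordProj_le (hdisj : Pairwise (Disjoint on G))
    (hcover : ∀ i, ∃ k, i ∈ G k) (I : Finset (Fin M)) (t : Fin p → ℝ) :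
    (∑ k ∈ I, euclNorm (coordProj (G k) t)) ^ 2 ≤ I.card * euclNorm t ^ 2 := by
  calc (∑ k ∈ I, euclNorm (coordProj (G k) t)) ^ 2
      ≤ I.card * ∑ k ∈ I, euclNorm (coordProj (G k) t) ^ 2 := sq_sum_le_card_mul_sum_sq
    _ ≤ I.card * euclNorm t ^ 2 := by
      rw [euclNorm_sq_eq_sum hdisj hcover]
      gcongr
      exact I.subset_univ

lemma dotProd_le_groupLassoNorm (hdisj : Pairwise (Disjoint on G))
    (hcover : ∀ i, ∃ k, i ∈ G k) {z : Fin p → ℝ}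
    (hz : ∀ k, euclNorm (coordProj (G k) z) ≤ 1) (t : Fin p → ℝ) :
    dotProd z t ≤ groupLassoNorm G t := by
  rw [dotProd_eq_sum_coordProj hdisj hcover, groupLassoNorm]
  exact Finset.sum_le_sum fun k _ =>
    (le_abs_self _).trans (abs_dotProd_le_of_euclNorm_le_one (hz k) _)

lemma dotProd_le_groupLassoNorm_add_sub (hdisj : Pairwise (Disjoint on G))
    (hcover : ∀ i, ∃ k, i ∈ G k) {z v : Fin p → ℝ}
    (hz : ∀ k, euclNorm (coordProj (G k) z) ≤ 1) (hzv : dotProd z v = groupLassoNorm G v)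
    (h : Fin p → ℝ) :
    dotProd z h ≤ groupLassoNorm G (v + h) - groupLassoNorm G v := by
  have := dotProd_le_groupLassoNorm hdisj hcover hz (v + h)
  rw [dotProd_add_right] at this
  linarith

lemma dotProd_le_groupLassoNorm_of_subgradient {z v : Fin p → ℝ}
    (hsub : ∀ h, dotProd z h ≤ groupLassoNorm G (v + h) - groupLassoNorm G v)
    (t : Fin p → ℝ) : dotProd z t ≤ groupLassoNorm G t := by
  linarith [hsub t, groupLassoNorm_add_le G v t]

lemma sum_euclNorm_coordProj_le (hdisj : Pairwise (Disjoint on G))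
    (hcover : ∀ i, ∃ k, i ∈ G k) {I : Finset (Fin M)} {w : Fin p → ℝ} {ρ r : ℝ} (hρ : 0 ≤ ρ)
    (hwr : euclNorm w ≤ r) (hI : 100 * (I.card : ℝ) ≤ (ρ / r) ^ 2) :
    ∑ k ∈ I, euclNorm (coordProj (G k) w) ≤ ρ / 10 := by
  have hIr : (I.card : ℝ) * r ^ 2 ≤ (ρ / 10) ^ 2 := by
    rcases eq_or_ne r 0 with rfl | hr
    · simpa using sq_nonneg (ρ / 10)
    · rw [div_pow, le_div_iff₀ (by positivity)] at hI
      nlinarith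
  refine (pow_le_pow_iff_left₀ (Finset.sum_nonneg fun _ _ => euclNorm_nonneg _) (by positivity)
    two_ne_zero).mp ?_
  calc (∑ k ∈ I, euclNorm (coordProj (G k) w)) ^ 2 ≤ I.card * euclNorm w ^ 2 :=
        sq_sum_euclNorm_coordProj_le hdisj hcover I w
    _ ≤ I.card * r ^ 2 := by gcongr; exact euclNorm_nonneg w
    _ ≤ (ρ / 10) ^ 2 := hIr

variable (G) in
-- `(euclNorm 0)⁻¹ = 0`, so the block is `0` where both `v` and `w` vanish on it.
noncomputable def groupLassoCertificate (v w : Fin p → ℝ) : Fin p → ℝ :=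
  ∑ k, coordProj (G k) (if coordProj (G k) v = 0 then (euclNorm (coordProj (G k) w))⁻¹ • w
    else (euclNorm (coordProj (G k) v))⁻¹ • v)

lemma coordProj_groupLassoCertificate (hdisj : Pairwise (Disjoint on G)) (v w : Fin p → ℝ)
    (k : Fin M) :
    coordProj (G k) (groupLassoCertificate G v w) =
      if coordProj (G k) v = 0 then (euclNorm (coordProj (G k) w))⁻¹ • coordProj (G k) w
      else (euclNorm (coordProj (G k) v))⁻¹ • coordProj (G k) v := by
  rw [groupLassoCertificate, coordProj_sum_coordProj hdisj, apply_ite (coordProj (G k)),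
    coordProj_smul, coordProj_smul]

lemma euclNorm_coordProj_groupLassoCertificate_le (hdisj : Pairwise (Disjoint on G))
    (v w : Fin p → ℝ) (k : Fin M) :
    euclNorm (coordProj (G k) (groupLassoCertificate G v w)) ≤ 1 := by
  rw [coordProj_groupLassoCertificate hdisj]
  split_ifs <;> exact euclNorm_inv_smul_self_le_one _

lemma dotProd_groupLassoCertificate_eq_groupLassoNorm (hdisj : Pairwise (Disjoint on G))
    (hcover : ∀ i, ∃ k, i ∈ G k) (v w : Fin p → ℝ) :
    dotProd (groupLassoCertificate G v w) v = groupLassoNorm G v := by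
  rw [dotProd_eq_sum_coordProj hdisj hcover, groupLassoNorm]
  refine Finset.sum_congr rfl fun k _ => ?_
  rw [coordProj_groupLassoCertificate hdisj]
  split_ifs with hk
  · simp [hk, euclNorm_zero, dotProd]
  · exact dotProd_inv_smul_self _

lemma groupLassoNorm_sub_le_dotProd_groupLassoCertificate (hdisj : Pairwise (Disjoint on G))
    (hcover : ∀ i, ∃ k, i ∈ G k) {v : Fin p → ℝ} {I : Finset (Fin M)}
    (hv : ∀ k ∉ I, coordProj (G k) v = 0) (w : Fin p → ℝ) :
    groupLassoNorm G w - 2 * ∑ k ∈ I, euclNorm (coordProj (G k) w) ≤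
      dotProd (groupLassoCertificate G v w) w := by
  set z := groupLassoCertificate G v w
  have hblock : ∀ k, euclNorm (coordProj (G k) w) -
      (if k ∈ I then 2 * euclNorm (coordProj (G k) w) else 0) ≤
        dotProd (coordProj (G k) z) (coordProj (G k) w) := by
    intro k
    split_ifs with hk
    · have := abs_dotProd_le_of_euclNorm_le_one
        (euclNorm_coordProj_groupLassoCertificate_le hdisj v w k) (coordProj (G k) w)
      linarith [neg_abs_le (dotProd (coordProj (G k) z) (coordProj (G k) w))]
    · rw [coordProj_groupLassoCertificate hdisj, if_pos (hv k hk), dotProd_inv_smul_self,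
        sub_zero]
  calc groupLassoNorm G w - 2 * ∑ k ∈ I, euclNorm (coordProj (G k) w)
      = ∑ k, (euclNorm (coordProj (G k) w) -
          if k ∈ I then 2 * euclNorm (coordProj (G k) w) else 0) := by
        rw [Finset.sum_sub_distrib, Finset.sum_ite_mem, Finset.univ_inter, Finset.mul_sum,
          groupLassoNorm]
    _ ≤ ∑ k, dotProd (coordProj (G k) z) (coordProj (G k) w) :=
        Finset.sum_le_sum fun k _ => hblock k
    _ = dotProd z w := (dotProd_eq_sum_coordProj hdisj hcover z w).symm

end GroupLasso

theorem group_lasso_sparsity_equation_general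
    {p M : ℕ} (G : Fin M → Finset (Fin p))
    (hdisj : ∀ k l, k ≠ l → Disjoint (G k) (G l))
    (hcover : ∀ i : Fin p, ∃ k, i ∈ G k)
    (ρ r : ℝ)
    (tstar u v : Fin p → ℝ) (htstar : tstar = u + v)
    (hu : groupLassoNorm G u ≤ ρ / 20)
    (I : Finset (Fin M)) (hv : ∀ k ∉ I, coordProj (G k) v = 0)
    (hI : 100 * (I.card : ℝ) ≤ (ρ / r) ^ 2) :
    ∀ w : Fin p → ℝ, groupLassoNorm G w = ρ → euclNorm w ≤ r →
      (∃ z : Fin p → ℝ,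
        (∀ k, euclNorm (coordProj (G k) z) ≤ 1) ∧
        dotProd z v = groupLassoNorm G v ∧
        (∀ h : Fin p → ℝ,
          dotProd z h ≤ groupLassoNorm G (v + h) - groupLassoNorm G v) ∧
        4 * ρ / 5 ≤ dotProd z w) ∧
      4 * ρ / 5 ≤ sSup ((fun z : Fin p → ℝ => dotProd z w) ''
        {z | ∃ v' : Fin p → ℝ, groupLassoNorm G (tstar - v') ≤ ρ / 20 ∧
          ∀ h : Fin p → ℝ,
            dotProd z h ≤ groupLassoNorm G (v' + h) - groupLassoNorm G v'}) := by
  intro w hwρ hwr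
  set z := groupLassoCertificate G v w
  have hz : ∀ k, euclNorm (coordProj (G k) z) ≤ 1 :=
    euclNorm_coordProj_groupLassoCertificate_le hdisj v w
  have hzv : dotProd z v = groupLassoNorm G v :=
    dotProd_groupLassoCertificate_eq_groupLassoNorm hdisj hcover v w
  have hsub := dotProd_le_groupLassoNorm_add_sub hdisj hcover hz hzv
  have hIw := sum_euclNorm_coordProj_le hdisj hcover (hwρ ▸ groupLassoNorm_nonneg G w) hwr hI
  have hzw : 4 * ρ / 5 ≤ dotProd z w := by
    linarith [groupLassoNorm_sub_le_dotProd_groupLassoCertificate hdisj hcover hv w]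
  refine ⟨⟨z, hz, hzv, hsub, hzw⟩, hzw.trans (le_csSup ⟨ρ, ?_⟩ ⟨z, ⟨v, ?_, hsub⟩, rfl⟩)⟩
  · rintro _ ⟨z', ⟨v', -, hz'⟩, rfl⟩
    exact hwρ ▸ dotProd_le_groupLassoNorm_of_subgradient hz' w
  · rwa [htstar, add_sub_cancel_right]

/-- Sparsity equation for the Group-LASSO norm (Lemma 3). -/
theorem group_lasso_sparsity_equation
    {p M : ℕ} (G : Fin M → Finset (Fin p))
    (hdisj : ∀ k l, k ≠ l → Disjoint (G k) (G l))
    (hcover : ∀ i : Fin p, ∃ k, i ∈ G k)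
    (ρ r : ℝ) (hρ : 0 < ρ) (hr : 0 < r)
    (tstar u v : Fin p → ℝ) (htstar : tstar = u + v)
    (hu : groupLassoNorm G u ≤ ρ / 20)
    (I : Finset (Fin M)) (hv : ∀ k ∉ I, coordProj (G k) v = 0)
    (hI : 100 * (I.card : ℝ) ≤ (ρ / r) ^ 2) :
    ∀ w : Fin p → ℝ, groupLassoNorm G w = ρ → euclNorm w ≤ r →
      (∃ z : Fin p → ℝ,
        (∀ k, euclNorm (coordProj (G k) z) ≤ 1) ∧
        dotProd z v = groupLassoNorm G v ∧
        (∀ h : Fin p → ℝ,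
          dotProd z h ≤ groupLassoNorm G (v + h) - groupLassoNorm G v) ∧
        4 * ρ / 5 ≤ dotProd z w) ∧
      4 * ρ / 5 ≤ sSup ((fun z : Fin p → ℝ => dotProd z w) ''
        {z | ∃ v' : Fin p → ℝ, groupLassoNorm G (tstar - v') ≤ ρ / 20 ∧
          ∀ h : Fin p → ℝ,
            dotProd z h ≤ groupLassoNorm G (v' + h) - groupLassoNorm G v'}) :=
  group_lasso_sparsity_equation_general G hdisj hcover ρ r tstar u v htstar hu I hv hI
end

section
/- Sparsity equation for the Total Variation norm (Lemma 5). Let D ∈ ℝ^{p×p} be the discrete difference matrix, let ρ > 0 and r > 0, and let t* = v + u ∈ ℝ^p with ‖u‖_TV ≤ ρ/20; set s = |supp(Dv)|. Assume 400·s ≤ (ρ/r)². Then for every w ∈ ℝ^p with ‖w‖_TV = ρ and ‖w‖₂ ≤ r there exists u* ∈ ℝ^p with ‖u*‖_∞ ≤ 1 such that z* = Dᵀu* satisfies ⟨z*, v⟩ = ‖v‖_TV (so z* is a subgradient of ‖·‖_TV at v, hence z* lies in Γ_{t*}(ρ)) and ⟨z*, w⟩ ≥ 4ρ/5. In particular,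 Δ(ρ) := inf{ sup_{z*∈Γ_{t*}(ρ)} ⟨z*, w⟩ : ‖w‖_TV = ρ, ‖w‖₂ ≤ r } ≥ 4ρ/5, i.e. ρ satisfies the sparsity equation for the TV norm. -/
/-- The discrete difference operator `D`: `(Dt)₁ = t₁` and `(Dt)ᵢ = tᵢ − tᵢ₋₁` for `i ≥ 2`. -/
def discreteDiff {p : ℕ} (t : Fin p → ℝ) : Fin p → ℝ :=
  fun i =>
    if h : (i : ℕ) = 0 then t i
    else t i - t ⟨(i : ℕ) - 1, lt_of_le_of_lt (Nat.sub_le _ _) i.isLt⟩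

/-- The total-variation norm `‖t‖_TV = ‖Dt‖₁`. -/
def tvNorm {p : ℕ} (t : Fin p → ℝ) : ℝ := ∑ i, |discreteDiff t i|

def fpred {p : ℕ} (i : Fin p) : Fin p :=
  ⟨(i : ℕ) - 1, lt_of_le_of_lt (Nat.sub_le _ _) i.isLt⟩

lemma discreteDiff_eq {p : ℕ} (t : Fin p → ℝ) (i : Fin p) :
    discreteDiff t i = if (i : ℕ) = 0 then t i else t i - t (fpred i) := by
  by_cases h : (i : ℕ) = 0 <;> simp [discreteDiff, fpred, h]

def fsucc {p : ℕ} (j : Fin p) : Fin p :=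
  if h : (j : ℕ) + 1 < p then ⟨(j : ℕ) + 1, h⟩ else j

lemma shift_sum {p : ℕ} (g : Fin p → ℝ) :
    ∑ i ∈ Finset.univ.filter (fun i : Fin p => (i : ℕ) ≠ 0), g (fpred i)
      = ∑ j ∈ Finset.univ.filter (fun j : Fin p => (j : ℕ) + 1 < p), g j := by
  apply Finset.sum_nbij' (fun i => fpred i) (fun j => fsucc j)
  · intro a ha
    simp only [Finset.mem_filter, Finset.mem_univ, true_and] at ha ⊢
    simp only [fpred]
    have := a.isLt
    omega
  · intro a ha
    simp only [Finset.mem_filter, Finset.mem_univ, true_and] at ha ⊢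
    simp [fsucc, ha]
  · intro a ha
    simp only [Finset.mem_filter, Finset.mem_univ, true_and] at ha
    have h1 : ((fpred a : Fin p) : ℕ) + 1 < p := by
      simp only [fpred]; omega
    ext
    rw [fsucc, dif_pos h1]
    show (a : ℕ) - 1 + 1 = a
    omega
  · intro a ha
    simp only [Finset.mem_filter, Finset.mem_univ, true_and] at ha
    ext
    simp only [fsucc, dif_pos ha, fpred]
    omega
  · intro a _; rfl

def zOf {p : ℕ} (u : Fin p → ℝ) : Fin p → ℝ :=
  fun j => u j - if h : (j : ℕ) + 1 < p then u ⟨(j : ℕ) + 1, h⟩ else 0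

lemma dot_transpose {p : ℕ} (u t : Fin p → ℝ) :
    dotProd (zOf u) t = dotProd u (discreteDiff t) := by
  classical
  set g : Fin p → ℝ :=
    fun j => (if h : (j : ℕ) + 1 < p then u ⟨(j : ℕ) + 1, h⟩ else 0) * t j with hg
  have hgz : ∀ j : Fin p, ¬ ((j : ℕ) + 1 < p) → g j = 0 := by
    intro j hj; simp [hg, dif_neg hj]
  have hL : dotProd u (discreteDiff t)
      = ∑ i, u i * t i - ∑ i ∈ Finset.univ.filter (fun i : Fin p => (i : ℕ) ≠ 0),
          u i * t (fpred i) := by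
    unfold dotProd
    rw [Finset.sum_filter, ← Finset.sum_sub_distrib]
    apply Finset.sum_congr rfl
    intro i _
    rw [discreteDiff_eq]
    by_cases h : (i : ℕ) = 0 <;> simp [h] <;> ring
  have hmid : ∑ i ∈ Finset.univ.filter (fun i : Fin p => (i : ℕ) ≠ 0), u i * t (fpred i)
      = ∑ j, g j := by
    have h1 : ∑ i ∈ Finset.univ.filter (fun i : Fin p => (i : ℕ) ≠ 0), u i * t (fpred i)
        = ∑ i ∈ Finset.univ.filter (fun i : Fin p => (i : ℕ) ≠ 0), g (fpred i) := by
      apply Finset.sum_congr rfl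
      intro i hi
      simp only [Finset.mem_filter, Finset.mem_univ, true_and] at hi
      have hlt : ((fpred i : Fin p) : ℕ) + 1 < p := by
        simp only [fpred]; have := i.isLt; omega
      simp only [hg, dif_pos hlt]
      congr 1
      · congr 1
        ext
        simp only [fpred]
        omega
    rw [h1, shift_sum g]
    exact Finset.sum_filter_of_ne (fun j _ hne => by
      by_contra hj
      exact hne (hgz j hj))
  have hR : dotProd (zOf u) t = ∑ i, u i * t i - ∑ j, g j := by
    unfold dotProd zOf
    rw [← Finset.sum_sub_distrib]
    apply Finset.sum_congr rfl
    intro j _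
    simp only [hg]
    ring
  rw [hR, hL, hmid]

lemma dd_add {p : ℕ} (a b : Fin p → ℝ) (i : Fin p) :
    discreteDiff (a + b) i = discreteDiff a i + discreteDiff b i := by
  by_cases h : (i : ℕ) = 0 <;> simp [discreteDiff_eq, h, Pi.add_apply] <;> ring

lemma tv_triangle {p : ℕ} (a b : Fin p → ℝ) : tvNorm (a + b) ≤ tvNorm a + tvNorm b := by
  unfold tvNorm
  rw [← Finset.sum_add_distrib]
  apply Finset.sum_le_sum
  intro i _
  rw [dd_add]
  exact abs_add_le _ _

lemma sign_abs_le (x : ℝ) : |Real.sign x| ≤ 1 := by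
  rcases lt_trichotomy x 0 with h | h | h
  · simp [Real.sign_of_neg h]
  · simp [h]
  · simp [Real.sign_of_pos h]

lemma sign_mul_self' (x : ℝ) : Real.sign x * x = |x| := by
  rcases lt_trichotomy x 0 with h | h | h
  · rw [Real.sign_of_neg h, abs_of_neg h]; ring
  · simp [h]
  · rw [Real.sign_of_pos h, abs_of_pos h]; ring

lemma subgrad_key {c a b : ℝ} (hc : |c| ≤ 1) (hca : c * a = |a|) :
    c * b ≤ |a + b| - |a| := by
  have h1 : c * (a + b) ≤ |a + b| :=
    calc c * (a + b) ≤ |c * (a + b)| := le_abs_self _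
      _ = |c| * |a + b| := abs_mul _ _
      _ ≤ 1 * |a + b| := mul_le_mul_of_nonneg_right hc (abs_nonneg _)
      _ = |a + b| := one_mul _
  have h2 : c * (a + b) = c * a + c * b := mul_add _ _ _
  linarith

lemma neg_abs_le_mul {c x : ℝ} (hc : |c| ≤ 1) : -|x| ≤ c * x := by
  have h1 : |c * x| ≤ |x| := by
    rw [abs_mul]
    calc |c| * |x| ≤ 1 * |x| := mul_le_mul_of_nonneg_right hc (abs_nonneg _)
      _ = |x| := one_mul _
  have := neg_abs_le (c * x)
  linarith

/-- Sparsity equation for the Total Variation norm (Lemma 5). -/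
theorem tv_sparsity_equation
    {p : ℕ} (ρ r : ℝ) (hρ : 0 < ρ) (hr : 0 < r)
    (tstar u v : Fin p → ℝ) (htstar : tstar = v + u)
    (hu : tvNorm u ≤ ρ / 20)
    (s : ℕ) (hs : s = (Finset.univ.filter fun i => discreteDiff v i ≠ 0).card)
    (hscond : 400 * (s : ℝ) ≤ (ρ / r) ^ 2) :
    ∀ w : Fin p → ℝ, tvNorm w = ρ → euclNorm w ≤ r →
      (∃ ustar : Fin p → ℝ,
        (∀ i, |ustar i| ≤ 1) ∧
        dotProd ustar (discreteDiff v) = tvNorm v ∧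
        (∀ h : Fin p → ℝ,
          dotProd ustar (discreteDiff h) ≤ tvNorm (v + h) - tvNorm v) ∧
        4 * ρ / 5 ≤ dotProd ustar (discreteDiff w)) ∧
      4 * ρ / 5 ≤ sSup ((fun z : Fin p → ℝ => dotProd z w) ''
        {z | ∃ v' : Fin p → ℝ, tvNorm (tstar - v') ≤ ρ / 20 ∧
          ∀ h : Fin p → ℝ, dotProd z h ≤ tvNorm (v' + h) - tvNorm v'}) := by
  classical
  intro w hw hwr
  set S : Finset (Fin p) := Finset.univ.filter (fun i => discreteDiff v i ≠ 0) with hSdef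
  set ustar : Fin p → ℝ := fun i =>
    if discreteDiff v i ≠ 0 then Real.sign (discreteDiff v i)
    else Real.sign (discreteDiff w i) with hust
  -- basic properties of ustar
  have habs : ∀ i, |ustar i| ≤ 1 := by
    intro i
    simp only [hust]
    split <;> exact sign_abs_le _
  have hmulv : ∀ i, ustar i * discreteDiff v i = |discreteDiff v i| := by
    intro i
    simp only [hust]
    by_cases h : discreteDiff v i ≠ 0
    · rw [if_pos h]; exact sign_mul_self' _
    · push_neg at h
      rw [h]; simp
  have hdotv : dotProd ustar (discreteDiff v) = tvNorm v := by
    unfold dotProd tvNorm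
    exact Finset.sum_congr rfl (fun i _ => hmulv i)
  have hsub : ∀ h : Fin p → ℝ,
      dotProd ustar (discreteDiff h) ≤ tvNorm (v + h) - tvNorm v := by
    intro h
    unfold dotProd tvNorm
    rw [← Finset.sum_sub_distrib]
    apply Finset.sum_le_sum
    intro i _
    rw [dd_add]
    exact subgrad_key (habs i) (hmulv i)
  -- sum of squares bound
  have hw2 : ∑ i, w i ^ 2 ≤ r ^ 2 := by
    have h0 : (0:ℝ) ≤ ∑ i, w i ^ 2 := Finset.sum_nonneg (fun i _ => sq_nonneg _)
    have := Real.sq_sqrt h0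
    have h2 : Real.sqrt (∑ i, w i ^ 2) ^ 2 ≤ r ^ 2 :=
      pow_le_pow_left₀ (Real.sqrt_nonneg _) hwr 2
    linarith
  have hdd2 : ∑ i, discreteDiff w i ^ 2 ≤ 4 * r ^ 2 := by
    have hpt : ∀ i : Fin p, discreteDiff w i ^ 2
        ≤ 2 * w i ^ 2 + 2 * (if (i : ℕ) = 0 then 0 else w (fpred i) ^ 2) := by
      intro i
      rw [discreteDiff_eq]
      by_cases h : (i : ℕ) = 0
      · rw [if_pos h, if_pos h]; nlinarith [sq_nonneg (w i)]
      · rw [if_neg h, if_neg h]; nlinarith [sq_nonneg (w i + w (fpred i))]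
    have h1 : ∑ i, discreteDiff w i ^ 2
        ≤ ∑ i, (2 * w i ^ 2 + 2 * (if (i : ℕ) = 0 then 0 else w (fpred i) ^ 2)) :=
      Finset.sum_le_sum (fun i _ => hpt i)
    have h2 : ∑ i, (2 * w i ^ 2 + 2 * (if (i : ℕ) = 0 then 0 else w (fpred i) ^ 2))
        = 2 * ∑ i, w i ^ 2
          + 2 * ∑ i ∈ Finset.univ.filter (fun i : Fin p => (i : ℕ) ≠ 0), w (fpred i) ^ 2 := by
      rw [Finset.sum_add_distrib, ← Finset.mul_sum, ← Finset.mul_sum]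
      congr 1
      rw [Finset.sum_filter]
      congr 1
      apply Finset.sum_congr rfl
      intro i _
      by_cases h : (i : ℕ) = 0 <;> simp [h]
    have h3 : ∑ i ∈ Finset.univ.filter (fun i : Fin p => (i : ℕ) ≠ 0), w (fpred i) ^ 2
        ≤ ∑ i, w i ^ 2 := by
      rw [shift_sum (fun j => w j ^ 2)]
      exact Finset.sum_le_sum_of_subset_of_nonneg (Finset.filter_subset _ _)
        (fun i _ _ => sq_nonneg _)
    linarith
  -- Cauchy-Schwarz bound on A
  set A : ℝ := ∑ i ∈ S, |discreteDiff w i| with hA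
  have hAnn : 0 ≤ A := Finset.sum_nonneg (fun i _ => abs_nonneg _)
  have hA2 : A ^ 2 ≤ (s : ℝ) * (4 * r ^ 2) := by
    have hcs := Finset.sum_mul_sq_le_sq_mul_sq S (fun _ => (1:ℝ))
      (fun i => |discreteDiff w i|)
    simp only [one_mul, one_pow, sq_abs] at hcs
    have hcard : ∑ _i ∈ S, (1:ℝ) = (s : ℝ) := by
      rw [Finset.sum_const, hs, hSdef]; simp
    have hsub2 : ∑ i ∈ S, discreteDiff w i ^ 2 ≤ ∑ i, discreteDiff w i ^ 2 :=
      Finset.sum_le_sum_of_subset_of_nonneg (Finset.subset_univ _)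
        (fun i _ _ => sq_nonneg _)
    calc A ^ 2 ≤ (∑ _i ∈ S, (1:ℝ)) * ∑ i ∈ S, discreteDiff w i ^ 2 := hcs
      _ = (s : ℝ) * ∑ i ∈ S, discreteDiff w i ^ 2 := by rw [hcard]
      _ ≤ (s : ℝ) * (4 * r ^ 2) := by
          apply mul_le_mul_of_nonneg_left _ (Nat.cast_nonneg _)
          exact le_trans hsub2 hdd2
  have h2A : 2 * A ≤ ρ / 5 := by
    have hsr : 400 * (s : ℝ) * r ^ 2 ≤ ρ ^ 2 := by
      have h1 : (ρ / r) ^ 2 = ρ ^ 2 / r ^ 2 := div_pow _ _ _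
      rw [h1] at hscond
      have hr2 : (0:ℝ) < r ^ 2 := by positivity
      calc 400 * (s:ℝ) * r ^ 2 ≤ ρ ^ 2 / r ^ 2 * r ^ 2 :=
            mul_le_mul_of_nonneg_right hscond (le_of_lt hr2)
        _ = ρ ^ 2 := div_mul_cancel₀ _ (ne_of_gt hr2)
    nlinarith [hA2, hAnn, hρ]
  -- lower bound on the dot product with w
  have hdotw : 4 * ρ / 5 ≤ dotProd ustar (discreteDiff w) := by
    have hsplit : dotProd ustar (discreteDiff w)
        = ∑ i ∈ S, ustar i * discreteDiff w i
          + ∑ i ∈ Finset.univ.filter (fun i => ¬ discreteDiff v i ≠ 0),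
              ustar i * discreteDiff w i := by
      unfold dotProd
      rw [hSdef]
      exact (Finset.sum_filter_add_sum_filter_not _ _ _).symm
    have hcomp : ∑ i ∈ Finset.univ.filter (fun i => ¬ discreteDiff v i ≠ 0),
        ustar i * discreteDiff w i
        = ∑ i ∈ Finset.univ.filter (fun i => ¬ discreteDiff v i ≠ 0),
            |discreteDiff w i| := by
      apply Finset.sum_congr rfl
      intro i hi
      simp only [Finset.mem_filter, Finset.mem_univ, true_and] at hi
      simp only [hust, if_neg hi]
      exact sign_mul_self' _
    have htotal : ∑ i ∈ S, |discreteDiff w i|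
        + ∑ i ∈ Finset.univ.filter (fun i => ¬ discreteDiff v i ≠ 0),
            |discreteDiff w i| = ρ := by
      rw [hSdef, Finset.sum_filter_add_sum_filter_not, ← hw]; rfl
    have hSlow : -A ≤ ∑ i ∈ S, ustar i * discreteDiff w i := by
      rw [hA, ← Finset.sum_neg_distrib]
      exact Finset.sum_le_sum (fun i _ => neg_abs_le_mul (habs i))
    rw [hsplit, hcomp]
    have : ∑ i ∈ Finset.univ.filter (fun i => ¬ discreteDiff v i ≠ 0),
        |discreteDiff w i| = ρ - A := by rw [← hA] at htotal; linarith
    rw [this]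
    linarith
  refine ⟨⟨ustar, habs, hdotv, hsub, hdotw⟩, ?_⟩
  -- the sSup part
  set T := ((fun z : Fin p → ℝ => dotProd z w) ''
      {z | ∃ v' : Fin p → ℝ, tvNorm (tstar - v') ≤ ρ / 20 ∧
        ∀ h : Fin p → ℝ, dotProd z h ≤ tvNorm (v' + h) - tvNorm v'}) with hT
  have hbdd : BddAbove T := by
    refine ⟨ρ, ?_⟩
    rintro x ⟨z, ⟨v', _, hz⟩, rfl⟩
    have h1 := hz w
    have h2 := tv_triangle v' w
    simp only
    rw [hw] at h2
    linarith
  have hmem : dotProd (zOf ustar) w ∈ T := by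
    refine ⟨zOf ustar, ⟨v, ?_, ?_⟩, rfl⟩
    · have : tstar - v = u := by rw [htstar]; ext i; simp
      rw [this]; exact hu
    · intro h
      rw [dot_transpose]
      exact hsub h
  calc 4 * ρ / 5 ≤ dotProd ustar (discreteDiff w) := hdotw
    _ = dotProd (zOf ustar) w := (dot_transpose _ _).symm
    _ ≤ sSup T := le_csSup hbdd hmem
end
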